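/- Let {K_n} be a finite family of incoherent 2×2 complex matrices with ∑_n K_n† K_n = I, let z, r be real numbers with z² + r² ≤ 1, and set σ = ∑_n K_n ρ(z,r) K_n†. Write z' = σ₀₀ − σ₁₁ and r' = 2|σ₀₁|. Then r'²·(1 − z²) ≤ r²·(1 − z'²). -/

import Mathlib

/-!
An incoherent Kraus operator `K` either rescales the basis vectors, swaps them, or maps both
into one of them. In the first two cases `τ = K ρ Kᴴ` has `τ₀₀ τ₁₁ / |τ₀₁|² = ρ₀₀ ρ₁₁ / |ρ₀₁|²`,
and in the last one `τ₀₁ = 0` and a diagonal entry of `τ` vanishes; so for `ρ = ρ(z,r)` every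
summand satisfies `(1 - z²) |τ₀₁|² = r² τ₀₀ τ₁₁`. Since `ρ(z,r) ≥ 0`, the summands are positive
semidefinite, so Cauchy–Schwarz over the Kraus operators gives `(1 - z²) |σ₀₁|² ≤ r² σ₀₀ σ₁₁`,
and trace preservation (`σ₀₀ + σ₁₁ = 1`) turns `4 σ₀₀ σ₁₁` into `1 - z'²`.
-/

open Matrix

/-- A 2×2 complex matrix is incoherent if each of its columns has at most one
nonzero entry. -/
def Incoherent (K : Matrix (Fin 2) (Fin 2) ℂ) : Prop :=
  ∀ j i i' : Fin 2, K i j ≠ 0 → K i' j ≠ 0 → i = i'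

/-- The qubit state `ρ(z,r) = (1/2) [[1+z, r], [r, 1-z]]`. -/
noncomputable def qubit (z r : ℝ) : Matrix (Fin 2) (Fin 2) ℂ :=
  (1 / 2 : ℂ) • !![1 + (z : ℂ), (r : ℂ); (r : ℂ), 1 - (z : ℂ)]

theorem mul_norm_sum_sq_le_sum_mul_sum {ι E : Type*} [SeminormedAddCommGroup E] (s : Finset ι)
    {w : ι → E} {x y : ι → ℝ} {a : ℝ} (ha : 0 ≤ a) (hx : ∀ i ∈ s, 0 ≤ x i)
    (hy : ∀ i ∈ s, 0 ≤ y i) (h : ∀ i ∈ s, a * ‖w i‖ ^ 2 = x i * y i) :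
    a * ‖∑ i ∈ s, w i‖ ^ 2 ≤ (∑ i ∈ s, x i) * ∑ i ∈ s, y i :=
  calc a * ‖∑ i ∈ s, w i‖ ^ 2 = (√a * ‖∑ i ∈ s, w i‖) ^ 2 := by rw [mul_pow, Real.sq_sqrt ha]
    _ ≤ (∑ i ∈ s, √a * ‖w i‖) ^ 2 := by
      rw [← Finset.mul_sum]
      gcongr
      exact norm_sum_le _ _
    _ ≤ (∑ i ∈ s, x i) * ∑ i ∈ s, y i :=
      Finset.sum_sq_le_sum_mul_sum_of_sq_le_mul s hx hy fun i hi => by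
        rw [mul_pow, Real.sq_sqrt ha, h i hi]

theorem Matrix.trace_sum_mul_mul_conjTranspose {n ι R : Type*} [Fintype n] [DecidableEq n]
    [CommSemiring R] [StarRing R] (s : Finset ι) (K : ι → Matrix n n R)
    (h : ∑ i ∈ s, (K i)ᴴ * K i = 1) (ρ : Matrix n n R) :
    trace (∑ i ∈ s, K i * ρ * (K i)ᴴ) = trace ρ := by
  simp_rw [trace_sum, trace_mul_cycle _ ρ, ← trace_sum, ← Finset.sum_mul, h, Matrix.one_mul]

lemma Incoherent.eq_zero_or_eq_zero {K : Matrix (Fin 2) (Fin 2) ℂ} (hK : Incoherent K)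
    (j : Fin 2) : K 0 j = 0 ∨ K 1 j = 0 := by
  by_contra! h
  exact absurd (hK j 0 1 h.1 h.2) (by decide)

theorem Incoherent.offDiag_mul_diag_cross_eq {K : Matrix (Fin 2) (Fin 2) ℂ} (hK : Incoherent K)
    (ρ : Matrix (Fin 2) (Fin 2) ℂ) :
    ρ 0 0 * ρ 1 1 * ((K * ρ * Kᴴ) 0 1 * (K * ρ * Kᴴ) 1 0) =
      ρ 0 1 * ρ 1 0 * ((K * ρ * Kᴴ) 0 0 * (K * ρ * Kᴴ) 1 1) := by
  rcases hK.eq_zero_or_eq_zero 0 with h₀ | h₀ <;> rcases hK.eq_zero_or_eq_zero 1 with h₁ | h₁ <;>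
    simp only [Matrix.mul_apply, Fin.sum_univ_two, conjTranspose_apply, RCLike.star_def, h₀, h₁,
      map_zero, mul_zero, zero_mul, add_zero, zero_add] <;>
    ring

@[simp] lemma qubit_apply_zero_zero (z r : ℝ) : qubit z r 0 0 = (1 + z) / 2 := by
  simp [qubit, div_eq_inv_mul]

@[simp] lemma qubit_apply_zero_one (z r : ℝ) : qubit z r 0 1 = r / 2 := by
  simp [qubit, div_eq_inv_mul]

@[simp] lemma qubit_apply_one_zero (z r : ℝ) : qubit z r 1 0 = r / 2 := by
  simp [qubit, div_eq_inv_mul]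

@[simp] lemma qubit_apply_one_one (z r : ℝ) : qubit z r 1 1 = (1 - z) / 2 := by
  simp [qubit, div_eq_inv_mul]

lemma trace_qubit (z r : ℝ) : trace (qubit z r) = 1 := by
  rw [trace_fin_two, qubit_apply_zero_zero, qubit_apply_one_one]
  ring

lemma qubit_isHermitian (z r : ℝ) : (qubit z r).IsHermitian := by
  ext i j
  fin_cases i <;> fin_cases j <;> simp

lemma quadratic_form_nonneg_of_sq_add_sq_le_one {z r : ℝ} (h : z ^ 2 + r ^ 2 ≤ 1) (a c : ℝ) :
    0 ≤ (1 + z) * a ^ 2 + 2 * r * a * c + (1 - z) * c ^ 2 := by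
  -- Cauchy–Schwarz: `|z (a² - c²) + r (2ac)| ≤ √(z² + r²) (a² + c²)`.
  have hL : (z * (a ^ 2 - c ^ 2) + 2 * r * a * c) ^ 2 ≤ (a ^ 2 + c ^ 2) ^ 2 := by
    nlinarith [sq_nonneg (r * (a ^ 2 - c ^ 2) - 2 * z * a * c),
      mul_nonneg (sub_nonneg.2 h) (sq_nonneg (a ^ 2 + c ^ 2))]
  linarith [(abs_le_of_sq_le_sq' hL (by positivity)).1]

section ComplexOrder

open ComplexOrder

lemma qubit_posSemidef {z r : ℝ} (h : z ^ 2 + r ^ 2 ≤ 1) : (qubit z r).PosSemidef := by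
  refine .of_dotProduct_mulVec_nonneg (qubit_isHermitian z r) fun x => ?_
  rw [Complex.nonneg_iff]
  simp only [dotProduct, mulVec, Fin.sum_univ_two, Pi.star_apply, RCLike.star_def,
    qubit_apply_zero_zero, qubit_apply_zero_one, qubit_apply_one_zero, qubit_apply_one_one,
    Complex.add_re, Complex.add_im, Complex.sub_re, Complex.sub_im, Complex.mul_re,
    Complex.mul_im, Complex.conj_re, Complex.conj_im, Complex.div_ofNat_re, Complex.div_ofNat_im,
    Complex.ofReal_re, Complex.ofReal_im, Complex.one_re, Complex.one_im]
  constructor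
  · nlinarith [quadratic_form_nonneg_of_sq_add_sq_le_one h (x 0).re (x 1).re,
      quadratic_form_nonneg_of_sq_add_sq_le_one h (x 0).im (x 1).im]
  · ring

lemma re_mul_qubit_mul_conjTranspose_apply_self_nonneg {m : Type*} [Fintype m] {z r : ℝ}
    (h : z ^ 2 + r ^ 2 ≤ 1) (K : Matrix m (Fin 2) ℂ) (j : m) :
    0 ≤ ((K * qubit z r * Kᴴ) j j).re :=
  (Complex.nonneg_iff.1 ((qubit_posSemidef h).mul_mul_conjTranspose_same K).diag_nonneg).1

end ComplexOrder

theorem Incoherent.one_sub_sq_mul_norm_sq_conj_qubit {K : Matrix (Fin 2) (Fin 2) ℂ}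
    (hK : Incoherent K) (z r : ℝ) :
    (1 - z ^ 2) * ‖(K * qubit z r * Kᴴ) 0 1‖ ^ 2 =
      r ^ 2 * ((K * qubit z r * Kᴴ) 0 0).re * ((K * qubit z r * Kᴴ) 1 1).re := by
  have hH := isHermitian_mul_mul_conjTranspose K (qubit_isHermitian z r)
  have hdiag : qubit z r 0 0 * qubit z r 1 1 = ((1 - z ^ 2) / 4 : ℝ) := by
    rw [qubit_apply_zero_zero, qubit_apply_one_one]; push_cast; ring
  have hoff : qubit z r 0 1 * qubit z r 1 0 = (r ^ 2 / 4 : ℝ) := by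
    rw [qubit_apply_zero_one, qubit_apply_one_zero]; push_cast; ring
  have h := hK.offDiag_mul_diag_cross_eq (qubit z r)
  rw [hdiag, hoff, ← hH.apply 1 0, Complex.star_def, Complex.mul_conj',
    ← Complex.conj_eq_iff_re.1 (hH.apply 0 0), ← Complex.conj_eq_iff_re.1 (hH.apply 1 1)] at h
  have h' : (1 - z ^ 2) / 4 * ‖(K * qubit z r * Kᴴ) 0 1‖ ^ 2 =
      r ^ 2 / 4 * (((K * qubit z r * Kᴴ) 0 0).re * ((K * qubit z r * Kᴴ) 1 1).re) := by
    exact_mod_cast h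
  linear_combination 4 * h'

/-- The output `(z', r')` of any incoherent operation applied to `ρ(z,r)` satisfies
the ellipse constraint `r'²(1-z²) ≤ r²(1-z'²)`. -/
theorem io_output_in_ellipse (n : ℕ) (K : Fin n → Matrix (Fin 2) (Fin 2) ℂ)
    (hinc : ∀ i, Incoherent (K i)) (hsum : ∑ i, (K i)ᴴ * K i = 1)
    (z r : ℝ) (hzr : z ^ 2 + r ^ 2 ≤ 1) :
    (2 * ‖(∑ i, K i * qubit z r * (K i)ᴴ) 0 1‖) ^ 2 * (1 - z ^ 2) ≤
      r ^ 2 * (1 - (((∑ i, K i * qubit z r * (K i)ᴴ) 0 0).re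
                    - ((∑ i, K i * qubit z r * (K i)ᴴ) 1 1).re) ^ 2) := by
  have hdiag (i : Fin n) (j : Fin 2) := re_mul_qubit_mul_conjTranspose_apply_self_nonneg hzr (K i) j
  have hcoh := mul_norm_sum_sq_le_sum_mul_sum Finset.univ
    (w := fun i => (K i * qubit z r * (K i)ᴴ) 0 1)
    (x := fun i => r ^ 2 * ((K i * qubit z r * (K i)ᴴ) 0 0).re)
    (y := fun i => ((K i * qubit z r * (K i)ᴴ) 1 1).re) (by nlinarith [sq_nonneg r])
    (fun i _ => mul_nonneg (sq_nonneg r) (hdiag i 0)) (fun i _ => hdiag i 1)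
    (fun i _ => (hinc i).one_sub_sq_mul_norm_sq_conj_qubit z r)
  simp only [← Finset.mul_sum, ← Complex.re_sum, ← Matrix.sum_apply] at hcoh
  have htrace := congrArg Complex.re
    ((trace_sum_mul_mul_conjTranspose _ _ hsum (qubit z r)).trans (trace_qubit z r))
  simp only [trace_fin_two, Complex.add_re, Complex.one_re] at htrace
  set σ := ∑ i, K i * qubit z r * (K i)ᴴ
  linear_combination 4 * hcoh + r ^ 2 * (1 + (σ 0 0).re + (σ 1 1).re) * htrace
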